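/- Let R be a DVR with uniformizer π and residue field k, and let L be a maximal integral lattice in a K-vector space V with nondegenerate symmetric form. Then the form on M = L*/L given by (x₁ + L, x₂ + L) ↦ image in k of π⟨x₁, x₂⟩ is a well-defined nondegenerate k-bilinear form on M. -/

import Mathlib

/-!
If `x ∈ L*` and `⟨x, x⟩ ∈ R`, then `L + R x` is again integral, so `x ∈ L` by maximality.
Applying this to `π ^ m • x` for `m` about half the order of the pole of `⟨x, x⟩` lowers that
order, so by descent `π ⟨x, x⟩ ∈ R`; hence `π • x ∈ L` and `π ⟨L*, L*⟩ ⊆ R`. The reduced form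
`π ⟨·, ·⟩ mod π` is then well defined and bilinear on `L*/L`, and if `x ∈ L*` is orthogonal to
all of `L*` then in particular `π ⟨x, x⟩ ∈ π R`, i.e. `⟨x, x⟩ ∈ R`, so `x ∈ L`.
-/

/-- `v` lies in the dual lattice `L* = {v : ⟨L, v⟩ ⊆ R}`. -/
def InDual (R : Type*) [CommRing R] (K : Type*) [Field K] [Algebra R K]
    (V : Type*) [AddCommGroup V] [Module K V]
    (B : LinearMap.BilinForm K V) (L : Set V) (v : V) : Prop :=
  ∀ l ∈ L, ∃ r : R, algebraMap R K r = B l v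

open Function LinearMap.BilinForm

theorem exists_pow_mul_mem_range_of_irreducible {R K : Type*} [CommRing R] [IsDomain R]
    [IsDiscreteValuationRing R] [Field K] [Algebra R K] [IsFractionRing R K]
    {π : R} (hπ : Irreducible π) (z : K) :
    ∃ n : ℕ, algebraMap R K (π ^ n) * z ∈ (algebraMap R K).range := by
  obtain ⟨⟨a, b⟩, hab⟩ := IsLocalization.surj (nonZeroDivisors R) z
  obtain ⟨n, u, hu⟩ :=
    IsDiscreteValuationRing.associated_pow_irreducible (nonZeroDivisors.coe_ne_zero b) hπ
  refine ⟨n, u * a, ?_⟩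
  rw [← hu, map_mul, map_mul, ← show z * algebraMap R K b = algebraMap R K a from hab]
  ring

section Lattice

variable {R K V : Type*} [CommRing R] [Field K] [Algebra R K]
  [AddCommGroup V] [Module K V] [Module R V] [IsScalarTower R K V]
  (B : LinearMap.BilinForm K V)

def IsIntegralLattice (L : Submodule R V) : Prop :=
  L.FG ∧ Submodule.span K (L : Set V) = ⊤ ∧
    ∀ x ∈ L, ∀ y ∈ L, B x y ∈ (algebraMap R K).range

def IsMaximalIntegralLattice (L : Submodule R V) : Prop :=
  IsIntegralLattice B L ∧ ∀ L' : Submodule R V, IsIntegralLattice B L' → L ≤ L' → L' = L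

variable {B} {L : Submodule R V}

theorem InDual.smul {v : V} (hv : InDual R K V B L v) (c : R) : InDual R K V B L (c • v) := by
  intro l hl
  rw [smul_right_of_tower, Algebra.smul_def]
  exact mul_mem (RingHom.mem_range_self _ c) (hv l hl)

theorem integral_sup_span_singleton (hsymm : ∀ v w : V, B v w = B w v)
    (hint : ∀ x ∈ L, ∀ y ∈ L, B x y ∈ (algebraMap R K).range) {x : V}
    (hx : InDual R K V B L x) (hxx : B x x ∈ (algebraMap R K).range) :
    ∀ a ∈ L ⊔ Submodule.span R {x}, ∀ b ∈ L ⊔ Submodule.span R {x},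
      B a b ∈ (algebraMap R K).range := by
  rintro _ ha _ hb
  obtain ⟨l, hl, _, hs, rfl⟩ := Submodule.mem_sup.1 ha
  obtain ⟨l', hl', _, hs', rfl⟩ := Submodule.mem_sup.1 hb
  obtain ⟨r, rfl⟩ := Submodule.mem_span_singleton.1 hs
  obtain ⟨r', rfl⟩ := Submodule.mem_span_singleton.1 hs'
  have hxl' : B x l' ∈ (algebraMap R K).range := hsymm l' x ▸ hx l' hl'
  simp only [add_left, add_right, smul_left_of_tower, smul_right_of_tower, Algebra.smul_def]
  have hR := RingHom.mem_range_self (algebraMap R K)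
  exact add_mem (add_mem (hint l hl l' hl') (mul_mem (hR r) hxl'))
    (mul_mem (hR r') (add_mem (hx l hl) (mul_mem (hR r) hxx)))

theorem IsMaximalIntegralLattice.mem_of_inDual (hL : IsMaximalIntegralLattice B L)
    (hsymm : ∀ v w : V, B v w = B w v) {x : V} (hx : InDual R K V B L x)
    (hxx : B x x ∈ (algebraMap R K).range) : x ∈ L := by
  obtain ⟨⟨hfg, hfull, hint⟩, hmax⟩ := hL
  have hle : L ≤ L ⊔ Submodule.span R {x} := le_sup_left
  have hspan : Submodule.span K ((L ⊔ Submodule.span R {x} : Submodule R V) : Set V) = ⊤ :=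
    top_le_iff.1 (hfull ▸ Submodule.span_mono hle)
  rw [← hmax _ ⟨hfg.sup (Submodule.fg_span_singleton x), hspan,
    integral_sup_span_singleton hsymm hint hx hxx⟩ hle]
  exact Submodule.mem_sup_right (Submodule.mem_span_singleton_self x)

variable [IsDomain R] [IsDiscreteValuationRing R] [IsFractionRing R K] {π : R}

theorem IsMaximalIntegralLattice.uniformizer_mul_self_mem_range
    (hL : IsMaximalIntegralLattice B L) (hsymm : ∀ v w : V, B v w = B w v)
    (hπ : Irreducible π) {x : V} (hx : InDual R K V B L x) :
    algebraMap R K π * B x x ∈ (algebraMap R K).range := by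
  obtain ⟨n, hn⟩ := exists_pow_mul_mem_range_of_irreducible hπ (B x x)
  induction n using Nat.strong_induction_on with
  | _ n ih =>
  rcases le_or_gt n 1 with hn1 | hn1
  · rw [← pow_one π, ← Nat.sub_add_cancel hn1, pow_add, map_mul, mul_assoc]
    exact mul_mem (RingHom.mem_range_self _ _) hn
  · -- `⟨π^m x, π^m x⟩ = π^(2m) ⟨x, x⟩` is integral as `2m ≥ n`, so `π^m x ∈ L`
    set m := (n + 1) / 2
    have hxm : π ^ m • x ∈ L := by
      refine hL.mem_of_inDual hsymm (hx.smul _) ?_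
      rw [smul_left_of_tower, smul_right_of_tower, Algebra.smul_def, Algebra.smul_def,
        ← mul_assoc, ← map_mul, ← pow_add, show m + m = (m + m - n) + n by omega, pow_add,
        map_mul, mul_assoc]
      exact mul_mem (RingHom.mem_range_self _ _) hn
    have hmx := hx _ hxm
    rw [smul_left_of_tower, Algebra.smul_def] at hmx
    exact ih m (by omega) hmx

theorem IsMaximalIntegralLattice.uniformizer_smul_mem (hL : IsMaximalIntegralLattice B L)
    (hsymm : ∀ v w : V, B v w = B w v) (hπ : Irreducible π) {x : V}
    (hx : InDual R K V B L x) : π • x ∈ L := by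
  refine hL.mem_of_inDual hsymm (hx.smul π) ?_
  rw [smul_left_of_tower, smul_right_of_tower, Algebra.smul_def, Algebra.smul_def]
  exact mul_mem (RingHom.mem_range_self _ π) (hL.uniformizer_mul_self_mem_range hsymm hπ hx)

theorem IsMaximalIntegralLattice.uniformizer_mul_mem_range (hL : IsMaximalIntegralLattice B L)
    (hsymm : ∀ v w : V, B v w = B w v) (hπ : Irreducible π) {x y : V}
    (hx : InDual R K V B L x) (hy : InDual R K V B L y) :
    algebraMap R K π * B x y ∈ (algebraMap R K).range := by
  have hxy := hy _ (hL.uniformizer_smul_mem hsymm hπ hx)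
  rwa [smul_left_of_tower, Algebra.smul_def] at hxy

end Lattice

section ReducedPairing

variable {R K V : Type*} [CommRing R] [Field K] [Algebra R K] [AddCommGroup V] [Module K V]
  (B : LinearMap.BilinForm K V) (π : R)

/-- `π ⟨x, y⟩ mod π`; a junk value when `π ⟨x, y⟩ ∉ R`. -/
noncomputable def reducedPairing (x y : V) : R ⧸ Ideal.span {π} :=
  Ideal.Quotient.mk _ (invFun (algebraMap R K) (algebraMap R K π * B x y))

variable {B π}

theorem reducedPairing_comm (hsymm : ∀ v w : V, B v w = B w v) (x y : V) :
    reducedPairing B π x y = reducedPairing B π y x := by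
  rw [reducedPairing, reducedPairing, hsymm]

variable [FaithfulSMul R K]

theorem reducedPairing_eq {x y : V} {r : R} (hr : algebraMap R K r = algebraMap R K π * B x y) :
    reducedPairing B π x y = Ideal.Quotient.mk _ r := by
  rw [reducedPairing, ← hr, leftInverse_invFun (FaithfulSMul.algebraMap_injective R K)]

theorem reducedPairing_eq_zero_of_mem_range {x y : V} (h : B x y ∈ (algebraMap R K).range) :
    reducedPairing B π x y = 0 := by
  obtain ⟨s, hs⟩ := h
  rw [reducedPairing_eq (r := π * s) (by rw [map_mul, hs]), Ideal.Quotient.eq_zero_iff_mem]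
  exact Ideal.mul_mem_right s _ (Ideal.mem_span_singleton_self π)

theorem reducedPairing_add_left {x x' y : V}
    (hx : algebraMap R K π * B x y ∈ (algebraMap R K).range)
    (hx' : algebraMap R K π * B x' y ∈ (algebraMap R K).range) :
    reducedPairing B π (x + x') y = reducedPairing B π x y + reducedPairing B π x' y := by
  obtain ⟨r, hr⟩ := hx
  obtain ⟨r', hr'⟩ := hx'
  rw [reducedPairing_eq hr, reducedPairing_eq hr', ← map_add,
    reducedPairing_eq (r := r + r') (by rw [map_add, hr, hr', add_left, mul_add])]

theorem reducedPairing_smul_left [Module R V] [IsScalarTower R K V] (c : R) {x y : V}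
    (h : algebraMap R K π * B x y ∈ (algebraMap R K).range) :
    reducedPairing B π (c • x) y = Ideal.Quotient.mk _ c * reducedPairing B π x y := by
  obtain ⟨r, hr⟩ := h
  rw [reducedPairing_eq hr, ← map_mul,
    reducedPairing_eq (r := c * r)
      (by rw [map_mul, hr, smul_left_of_tower, Algebra.smul_def]; ring)]

theorem reducedPairing_congr_left {x x' y : V}
    (h : algebraMap R K π * B x' y ∈ (algebraMap R K).range)
    (hsub : B (x - x') y ∈ (algebraMap R K).range) :
    reducedPairing B π x y = reducedPairing B π x' y := by
  rw [← sub_add_cancel x x',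
    reducedPairing_add_left (mul_mem (RingHom.mem_range_self _ π) hsub) h,
    reducedPairing_eq_zero_of_mem_range hsub, zero_add]

theorem mem_range_of_reducedPairing_eq_zero (hπ : π ≠ 0) {x y : V}
    (h : algebraMap R K π * B x y ∈ (algebraMap R K).range) (h0 : reducedPairing B π x y = 0) :
    B x y ∈ (algebraMap R K).range := by
  obtain ⟨r, hr⟩ := h
  rw [reducedPairing_eq hr, Ideal.Quotient.eq_zero_iff_mem, Ideal.mem_span_singleton] at h0
  obtain ⟨s, rfl⟩ := h0
  have hπ' : algebraMap R K π ≠ 0 :=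
    (map_ne_zero_iff _ (FaithfulSMul.algebraMap_injective R K)).2 hπ
  exact ⟨s, mul_left_cancel₀ hπ' (by rw [← map_mul, hr])⟩

end ReducedPairing

theorem stmt16_general (R : Type*) [CommRing R] [IsDomain R] [IsDiscreteValuationRing R]
    (π : R) (hπ : Irreducible π)
    (K : Type*) [Field K] [Algebra R K] [IsFractionRing R K]
    (V : Type*) [AddCommGroup V] [Module K V]
    [Module R V] [IsScalarTower R K V]
    (B : LinearMap.BilinForm K V)
    (hsymm : ∀ v w : V, B v w = B w v)
    (L : Submodule R V) (hfg : L.FG)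
    (hfull : Submodule.span K (L : Set V) = ⊤)
    (hint : ∀ x ∈ L, ∀ y ∈ L, ∃ r : R, algebraMap R K r = B x y)
    (hmax : ∀ L' : Submodule R V, L'.FG → Submodule.span K (L' : Set V) = ⊤ →
      (∀ x ∈ L', ∀ y ∈ L', ∃ r : R, algebraMap R K r = B x y) → L ≤ L' → L' = L) :
    ∃ Bm : V → V → R ⧸ Ideal.span {π},
      -- the form computes `π⟨x₁, x₂⟩` reduced mod `π`
      (∀ x y : V, InDual R K V B L x → InDual R K V B L y →
        ∀ r : R, algebraMap R K r = algebraMap R K π * B x y →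
          Bm x y = Ideal.Quotient.mk (Ideal.span {π}) r) ∧
      -- it is well defined on `L*/L`
      (∀ x x' y : V, InDual R K V B L x → InDual R K V B L x' → InDual R K V B L y →
        x - x' ∈ L → Bm x y = Bm x' y) ∧
      (∀ x y y' : V, InDual R K V B L x → InDual R K V B L y → InDual R K V B L y' →
        y - y' ∈ L → Bm x y = Bm x y') ∧
      -- it is `k`-bilinear (symmetric case: additive and `R`-homogeneous in each slot)
      (∀ x x' y : V, InDual R K V B L x → InDual R K V B L x' → InDual R K V B L y →
        Bm (x + x') y = Bm x y + Bm x' y) ∧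
      (∀ (c : R) (x y : V), InDual R K V B L x → InDual R K V B L y →
        Bm (c • x) y = Ideal.Quotient.mk (Ideal.span {π}) c * Bm x y) ∧
      (∀ x y y' : V, InDual R K V B L x → InDual R K V B L y → InDual R K V B L y' →
        Bm x (y + y') = Bm x y + Bm x y') ∧
      (∀ (c : R) (x y : V), InDual R K V B L x → InDual R K V B L y →
        Bm x (c • y) = Ideal.Quotient.mk (Ideal.span {π}) c * Bm x y) ∧
      -- it is nondegenerate on `L*/L`
      (∀ x : V, InDual R K V B L x →
        (∀ y : V, InDual R K V B L y → Bm x y = 0) → x ∈ L) := by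
  have hL : IsMaximalIntegralLattice B L :=
    ⟨⟨hfg, hfull, hint⟩, fun L' hL' hle => hmax L' hL'.1 hL'.2.1 hL'.2.2 hle⟩
  have hpair : ∀ {x y : V}, InDual R K V B L x → InDual R K V B L y →
      algebraMap R K π * B x y ∈ (algebraMap R K).range :=
    hL.uniformizer_mul_mem_range hsymm hπ
  have hcomm := reducedPairing_comm (π := π) hsymm
  refine ⟨reducedPairing B π, fun x y _ _ r hr => reducedPairing_eq hr, ?_, ?_, ?_, ?_, ?_, ?_, ?_⟩
  · intro x x' y _ hx' hy hxx'
    exact reducedPairing_congr_left (hpair hx' hy) (hy _ hxx')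
  · intro x y y' hx _ hy' hyy'
    rw [hcomm x y, hcomm x y']
    exact reducedPairing_congr_left (hpair hy' hx) (hx _ hyy')
  · intro x x' y hx hx' hy
    exact reducedPairing_add_left (hpair hx hy) (hpair hx' hy)
  · intro c x y hx hy
    exact reducedPairing_smul_left c (hpair hx hy)
  · intro x y y' hx hy hy'
    rw [hcomm x, hcomm x y, hcomm x y']
    exact reducedPairing_add_left (hpair hy hx) (hpair hy' hx)
  · intro c x y hx hy
    rw [hcomm x, hcomm x y]
    exact reducedPairing_smul_left c (hpair hy hx)
  · intro x hx horth
    exact hL.mem_of_inDual hsymm hx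
      (mem_range_of_reducedPairing_eq_zero hπ.ne_zero (hpair hx hx) (horth x hx))

/-- For a maximal integral lattice `L` with dual `L*`, the assignment
`(x₁ + L, x₂ + L) ↦ π⟨x₁, x₂⟩ mod π` is a well-defined nondegenerate
`k`-bilinear form on `M = L*/L`, where `k = R/(π)`. -/
theorem stmt16 (R : Type*) [CommRing R] [IsDomain R] [IsDiscreteValuationRing R]
    (π : R) (hπ : Irreducible π)
    (K : Type*) [Field K] [Algebra R K] [IsFractionRing R K]
    (V : Type*) [AddCommGroup V] [Module K V] [FiniteDimensional K V]
    [Module R V] [IsScalarTower R K V]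
    (B : LinearMap.BilinForm K V) (hB : B.Nondegenerate)
    (hsymm : ∀ v w : V, B v w = B w v)
    (L : Submodule R V) (hfg : L.FG)
    (hfull : Submodule.span K (L : Set V) = ⊤)
    (hint : ∀ x ∈ L, ∀ y ∈ L, ∃ r : R, algebraMap R K r = B x y)
    (hmax : ∀ L' : Submodule R V, L'.FG → Submodule.span K (L' : Set V) = ⊤ →
      (∀ x ∈ L', ∀ y ∈ L', ∃ r : R, algebraMap R K r = B x y) → L ≤ L' → L' = L) :
    ∃ Bm : V → V → R ⧸ Ideal.span {π},
      -- the form computes `π⟨x₁, x₂⟩` reduced mod `π`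
      (∀ x y : V, InDual R K V B L x → InDual R K V B L y →
        ∀ r : R, algebraMap R K r = algebraMap R K π * B x y →
          Bm x y = Ideal.Quotient.mk (Ideal.span {π}) r) ∧
      -- it is well defined on `L*/L`
      (∀ x x' y : V, InDual R K V B L x → InDual R K V B L x' → InDual R K V B L y →
        x - x' ∈ L → Bm x y = Bm x' y) ∧
      (∀ x y y' : V, InDual R K V B L x → InDual R K V B L y → InDual R K V B L y' →
        y - y' ∈ L → Bm x y = Bm x y') ∧
      -- it is `k`-bilinear (symmetric case: additive and `R`-homogeneous in each slot)
      (∀ x x' y : V, InDual R K V B L x → InDual R K V B L x' → InDual R K V B L y →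
        Bm (x + x') y = Bm x y + Bm x' y) ∧
      (∀ (c : R) (x y : V), InDual R K V B L x → InDual R K V B L y →
        Bm (c • x) y = Ideal.Quotient.mk (Ideal.span {π}) c * Bm x y) ∧
      (∀ x y y' : V, InDual R K V B L x → InDual R K V B L y → InDual R K V B L y' →
        Bm x (y + y') = Bm x y + Bm x y') ∧
      (∀ (c : R) (x y : V), InDual R K V B L x → InDual R K V B L y →
        Bm x (c • y) = Ideal.Quotient.mk (Ideal.span {π}) c * Bm x y) ∧
      -- it is nondegenerate on `L*/L`
      (∀ x : V, InDual R K V B L x →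
        (∀ y : V, InDual R K V B L y → Bm x y = 0) → x ∈ L) :=
  stmt16_general R π hπ K V B hsymm L hfg hfull hint hmax
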